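/- Let μ be a Borel probability measure on ℝ^d and let S and S* be nonempty compact subsets of ℝ^d such that the pushforward measures μ_S and μ_{S*} are non-atomic with finite first moments. Suppose there exist r* > 0 and α ∈ (0,1) such that F_{μ_S}(r) ≤ α F_{μ_{S*}}(r) for all r ∈ (0, r*). If W : [0,1] → [0,∞) is nonincreasing with W(t) = 0 for all t ≥ F_{μ_{S*}}(r*), then Φ_W(μ_S) − Φ_W(μ_{S*}) ≥ (1−α) ∫_0^{r*} W( F_{μ_{S*}}(r) ) F_{μ_{S*}}(r) dr. -/

import Mathlib

/-!
For a non-atomic law ρ on [0, ∞) the map F_ρ pushes ρ to the uniform law on (0, 1], so Tonelli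
gives the layer-cake form Φ_W(ρ) = ∫₀^∞ H(F_ρ(r)) dr with H(u) = ∫_u^1 W. Since W is
nonincreasing, H(F_S(r)) - H(F_{S*}(r)) = ∫_{F_S(r)}^{F_{S*}(r)} W is at least
(F_{S*}(r) - F_S(r)) W(F_{S*}(r)) ≥ (1 - α) F_{S*}(r) W(F_{S*}(r)) for r < r*, while for r ≥ r*
the term H(F_{S*}(r)) vanishes because W = 0 beyond F_{S*}(r*). Integrating in r gives the bound.
-/

open MeasureTheory Set

/-- The cumulative distribution function `F_ρ(r) = ρ([0,r])`. -/
noncomputable def cdf (ρ : Measure ℝ) (r : ℝ) : ℝ := (ρ (Iic r)).toReal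

/-- The robust functional `Φ_W(ρ) = ∫ r W(F_ρ(r)) dρ(r)`. -/
noncomputable def PhiW (W : ℝ → ℝ) (ρ : Measure ℝ) : ℝ := ∫ r, r * W (cdf ρ r) ∂ρ

/-- The distortion function `d_S(x) = min_{y ∈ S} ‖x - y‖² = (dist(x,S))²`. -/
noncomputable def distS {d : ℕ} (S : Set (EuclideanSpace ℝ (Fin d)))
    (x : EuclideanSpace ℝ (Fin d)) : ℝ := (Metric.infDist x S) ^ 2

/-- The pushforward `μ_S` of `μ` under `d_S`. -/
noncomputable def pushS {d : ℕ} (μ : Measure (EuclideanSpace ℝ (Fin d)))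
    (S : Set (EuclideanSpace ℝ (Fin d))) : Measure ℝ := Measure.map (distS S) μ

open Filter Topology
open scoped ENNReal

section CDF

variable (ρ : Measure ℝ) [IsProbabilityMeasure ρ]

lemma cdf_eq_probabilityTheory_cdf : cdf ρ = ProbabilityTheory.cdf ρ :=
  funext fun x => (ProbabilityTheory.cdf_eq_real ρ x).symm

lemma monotone_cdf : Monotone (cdf ρ) := by
  rw [cdf_eq_probabilityTheory_cdf]
  exact ProbabilityTheory.monotone_cdf ρ

lemma cdf_mem_Icc (x : ℝ) : cdf ρ x ∈ Icc (0 : ℝ) 1 := by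
  rw [cdf_eq_probabilityTheory_cdf]
  exact ⟨ProbabilityTheory.cdf_nonneg ρ x, ProbabilityTheory.cdf_le_one ρ x⟩

lemma tendsto_cdf_atBot : Tendsto (cdf ρ) atBot (𝓝 0) := by
  rw [cdf_eq_probabilityTheory_cdf]
  exact ProbabilityTheory.tendsto_cdf_atBot ρ

lemma tendsto_cdf_atTop : Tendsto (cdf ρ) atTop (𝓝 1) := by
  rw [cdf_eq_probabilityTheory_cdf]
  exact ProbabilityTheory.tendsto_cdf_atTop ρ

lemma ofReal_cdf (x : ℝ) : ENNReal.ofReal (cdf ρ x) = ρ (Iic x) :=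
  ENNReal.ofReal_toReal (measure_ne_top ρ _)

lemma continuous_cdf [NullSingletonClass ρ] : Continuous (cdf ρ) := by
  rw [cdf_eq_probabilityTheory_cdf, continuous_iff_continuousAt]
  intro x
  set F := ProbabilityTheory.cdf ρ
  rw [F.mono.continuousAt_iff_leftLim_eq_rightLim, F.rightLim_eq]
  have hjump : ENNReal.ofReal (F x - Function.leftLim F x) = 0 := by
    rw [← F.measure_singleton, ProbabilityTheory.measure_cdf, measure_singleton]
  have := F.mono.leftLim_le (le_refl x)
  linarith [ENNReal.ofReal_eq_zero.1 hjump]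

lemma measure_cdf_le [NullSingletonClass ρ] {t : ℝ} (ht : t < 1) :
    ρ {x | cdf ρ x ≤ t} = ENNReal.ofReal t := by
  set A := {x | cdf ρ x ≤ t}
  rcases A.eq_empty_or_nonempty with hA | hA
  · have ht0 : t ≤ 0 := by
      refine ge_of_tendsto (tendsto_cdf_atBot ρ) (Eventually.of_forall fun x => ?_)
      exact (not_le.1 (eq_empty_iff_forall_notMem.1 hA x)).le
    rw [hA, measure_empty, ENNReal.ofReal_of_nonpos ht0]
  have hbdd : BddAbove A := by
    obtain ⟨b, hb⟩ := ((tendsto_cdf_atTop ρ).eventually (lt_mem_nhds ht)).exists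
    exact ⟨b, fun x hx => le_of_not_gt fun hbx => (hx.trans_lt hb).not_ge (monotone_cdf ρ hbx.le)⟩
  have hclosed : IsClosed A := isClosed_le (continuous_cdf ρ) continuous_const
  set a := sSup A
  have hA_eq : A = Iic a :=
    Subset.antisymm (fun x hx => le_csSup hbdd hx)
      fun x hx => (monotone_cdf ρ hx).trans (hclosed.csSup_mem hA hbdd)
  have hFa : cdf ρ a = t := by
    refine le_antisymm (hclosed.csSup_mem hA hbdd) (ge_of_tendsto
      (((continuous_cdf ρ).tendsto a).mono_left (nhdsWithin_le_nhds (s := Ioi a))) ?_)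
    filter_upwards [self_mem_nhdsWithin] with x (hx : a < x)
    exact le_of_lt (not_le.1 fun h => hx.not_ge (le_csSup hbdd h))
  rw [hA_eq, ← ofReal_cdf, hFa]

lemma map_cdf [NullSingletonClass ρ] : ρ.map (cdf ρ) = volume.restrict (Ioc 0 1) := by
  have hF := (continuous_cdf ρ).measurable
  refine Measure.ext_of_Iic _ _ fun t => ?_
  rw [Measure.map_apply hF measurableSet_Iic, Measure.restrict_apply measurableSet_Iic,
    inter_comm, Ioc_inter_Iic]
  rcases lt_or_ge t 1 with ht | ht
  · rw [min_eq_right ht.le, Real.volume_Ioc, sub_zero]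
    exact measure_cdf_le ρ ht
  · rw [min_eq_left ht, Real.volume_Ioc, sub_zero, ENNReal.ofReal_one]
    convert measure_univ (μ := ρ)
    exact eq_univ_of_forall fun x => (cdf_mem_Icc ρ x).2.trans ht

lemma Ioi_ae_eq_preimage_cdf [NullSingletonClass ρ] (r : ℝ) :
    Ioi r =ᵐ[ρ] cdf ρ ⁻¹' Ioi (cdf ρ r) := by
  have hF := (continuous_cdf ρ).measurable
  have hle : ρ (cdf ρ ⁻¹' Iic (cdf ρ r)) ≤ ρ (Iic r) := by
    rw [← Measure.map_apply hF measurableSet_Iic, map_cdf, Measure.restrict_apply measurableSet_Iic,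
      inter_comm, Ioc_inter_Iic, min_eq_right (cdf_mem_Icc ρ r).2, Real.volume_Ioc, sub_zero,
      ofReal_cdf]
  have hIic : Iic r =ᵐ[ρ] cdf ρ ⁻¹' Iic (cdf ρ r) :=
    ae_eq_of_subset_of_measure_ge (fun s hs => monotone_cdf ρ hs) hle
      measurableSet_Iic.nullMeasurableSet (measure_ne_top ρ _)
  simpa only [← preimage_compl, compl_Iic] using hIic.compl

variable {ρ} in
lemma setLIntegral_Ioi_comp_cdf [NullSingletonClass ρ] {g : ℝ → ℝ≥0∞} (hg : Measurable g)
    (r : ℝ) : ∫⁻ s in Ioi r, g (cdf ρ s) ∂ρ = ∫⁻ t in Ioc (cdf ρ r) 1, g t := by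
  rw [setLIntegral_congr (Ioi_ae_eq_preimage_cdf ρ r),
    ← setLIntegral_map measurableSet_Ioi hg (continuous_cdf ρ).measurable, map_cdf,
    Measure.restrict_restrict measurableSet_Ioi, inter_comm, Ioc_inter_Ioi,
    max_eq_right (cdf_mem_Icc ρ r).1]

end CDF

lemma lintegral_ofReal_mul_eq_lintegral_Ioi (ρ : Measure ℝ) [SFinite ρ] {f : ℝ → ℝ≥0∞}
    (hf : Measurable f) :
    ∫⁻ s, ENNReal.ofReal s * f s ∂ρ = ∫⁻ r in Ioi 0, ∫⁻ s in Ioi r, f s ∂ρ := by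
  have hinner : ∀ s,
      ENNReal.ofReal s * f s = ∫⁻ r in Ioi 0, (Iio s).indicator (fun _ => f s) r := by
    intro s
    rw [lintegral_indicator measurableSet_Iio, setLIntegral_const,
      Measure.restrict_apply measurableSet_Iio, Iio_inter_Ioi, Real.volume_Ioo, sub_zero, mul_comm]
  have hmeas : Measurable (Function.uncurry fun s r => (Iio s).indicator (fun _ => f s) r) := by
    have : (Function.uncurry fun s r => (Iio s).indicator (fun _ => f s) r) =
        {p : ℝ × ℝ | p.2 < p.1}.indicator (fun p => f p.1) := by
      ext ⟨s, r⟩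
      simp only [Function.uncurry_apply_pair, indicator_apply, mem_Iio, mem_ofPred_eq]
    rw [this]
    exact (hf.comp measurable_fst).indicator (measurableSet_lt measurable_snd measurable_fst)
  simp_rw [hinner]
  rw [lintegral_lintegral_swap hmeas.aemeasurable]
  refine setLIntegral_congr_fun measurableSet_Ioi fun r _ => ?_
  rw [← lintegral_indicator measurableSet_Ioi]
  congr 1 with s

section Tail

variable {W : ℝ → ℝ}

lemma antitone_comp_cdf (ρ : Measure ℝ) [IsProbabilityMeasure ρ] (hW : AntitoneOn W (Icc 0 1)) :
    Antitone (W ∘ cdf ρ) :=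
  fun _ _ hab => hW (cdf_mem_Icc ρ _) (cdf_mem_Icc ρ _) (monotone_cdf ρ hab)

lemma setLIntegral_Ioc_ofReal_eq {u : ℝ} (hu : u ∈ Icc (0 : ℝ) 1) (hW : AntitoneOn W (Icc 0 1))
    (hWnn : ∀ t ∈ Icc (0 : ℝ) 1, 0 ≤ W t) :
    ∫⁻ t in Ioc u 1, ENNReal.ofReal (W t) = ENNReal.ofReal (∫ t in u..1, W t) := by
  have hint : IntervalIntegrable W volume u 1 :=
    (hW.mono (uIcc_subset_Icc hu ⟨zero_le_one, le_rfl⟩)).intervalIntegrable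
  rw [intervalIntegral.integral_of_le hu.2, ofReal_integral_eq_lintegral_ofReal hint.1]
  exact ae_restrict_of_forall_mem measurableSet_Ioc fun t ht => hWnn t ⟨hu.1.trans ht.1.le, ht.2⟩

lemma intervalIntegral_to_one_nonneg {u : ℝ} (hu : u ∈ Icc (0 : ℝ) 1)
    (hWnn : ∀ t ∈ Icc (0 : ℝ) 1, 0 ≤ W t) : 0 ≤ ∫ t in u..1, W t :=
  intervalIntegral.integral_nonneg hu.2 fun t ht => hWnn t ⟨hu.1.trans ht.1, ht.2⟩

variable (ρ : Measure ℝ) [IsProbabilityMeasure ρ] [NullSingletonClass ρ]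

lemma lintegral_ofReal_mul_comp_cdf (hW : AntitoneOn W (Icc 0 1))
    (hWnn : ∀ t ∈ Icc (0 : ℝ) 1, 0 ≤ W t) :
    ∫⁻ s, ENNReal.ofReal s * ENNReal.ofReal (W (cdf ρ s)) ∂ρ =
      ∫⁻ r in Ioi 0, ENNReal.ofReal (∫ t in cdf ρ r..1, W t) := by
  -- `W` need not be measurable off `[0, 1]`, but an antitone extension of it is.
  obtain ⟨W', hW'anti, hWW'⟩ := hW.exists_antitone_extension
    ⟨W 1, by rintro _ ⟨t, ht, rfl⟩; exact hW ht ⟨zero_le_one, le_rfl⟩ ht.2⟩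
    ⟨W 0, by rintro _ ⟨t, ht, rfl⟩; exact hW ⟨le_rfl, zero_le_one⟩ ht ht.1⟩
  rw [lintegral_ofReal_mul_eq_lintegral_Ioi ρ (f := fun s => ENNReal.ofReal (W (cdf ρ s)))
    (ENNReal.measurable_ofReal.comp (antitone_comp_cdf ρ hW).measurable)]
  refine setLIntegral_congr_fun measurableSet_Ioi fun r _ => ?_
  have hIoc : Ioc (cdf ρ r) 1 ⊆ Icc 0 1 := fun t ht => ⟨(cdf_mem_Icc ρ r).1.trans ht.1.le, ht.2⟩
  calc ∫⁻ s in Ioi r, ENNReal.ofReal (W (cdf ρ s)) ∂ρ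
      = ∫⁻ s in Ioi r, ENNReal.ofReal (W' (cdf ρ s)) ∂ρ := by
        simp only [hWW' (cdf_mem_Icc ρ _)]
    _ = ∫⁻ t in Ioc (cdf ρ r) 1, ENNReal.ofReal (W' t) :=
        setLIntegral_Ioi_comp_cdf (ENNReal.measurable_ofReal.comp hW'anti.measurable) r
    _ = ∫⁻ t in Ioc (cdf ρ r) 1, ENNReal.ofReal (W t) :=
        setLIntegral_congr_fun measurableSet_Ioc fun t ht => by rw [hWW' (hIoc ht)]
    _ = _ := setLIntegral_Ioc_ofReal_eq (cdf_mem_Icc ρ r) hW hWnn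

lemma PhiW_eq_toReal_lintegral (hpos : ∀ᵐ s ∂ρ, 0 ≤ s) (hW : AntitoneOn W (Icc 0 1))
    (hWnn : ∀ t ∈ Icc (0 : ℝ) 1, 0 ≤ W t) :
    PhiW W ρ = (∫⁻ r in Ioi 0, ENNReal.ofReal (∫ t in cdf ρ r..1, W t)).toReal := by
  have hm : Measurable fun s => s * W (cdf ρ s) :=
    measurable_id.mul (antitone_comp_cdf ρ hW).measurable
  rw [PhiW, integral_eq_lintegral_of_nonneg_ae ?_ hm.aestronglyMeasurable,
    ← lintegral_ofReal_mul_comp_cdf ρ hW hWnn]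
  · congr 1
    refine lintegral_congr_ae ?_
    filter_upwards [hpos] with s hs using ENNReal.ofReal_mul hs
  · filter_upwards [hpos] with s hs using mul_nonneg hs (hWnn _ (cdf_mem_Icc ρ s))

lemma lintegral_ofReal_intervalIntegral_lt_top (hint : Integrable (fun r => r) ρ)
    (hW : AntitoneOn W (Icc 0 1)) (hWnn : ∀ t ∈ Icc (0 : ℝ) 1, 0 ≤ W t) :
    ∫⁻ r in Ioi 0, ENNReal.ofReal (∫ t in cdf ρ r..1, W t) < ∞ := by
  rw [← lintegral_ofReal_mul_comp_cdf ρ hW hWnn]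
  calc ∫⁻ s, ENNReal.ofReal s * ENNReal.ofReal (W (cdf ρ s)) ∂ρ
      ≤ ∫⁻ s, ENNReal.ofReal s * ENNReal.ofReal (W 0) ∂ρ := by
        gcongr with s
        exact hW ⟨le_rfl, zero_le_one⟩ (cdf_mem_Icc ρ s) (cdf_mem_Icc ρ s).1
    _ = (∫⁻ s, ENNReal.ofReal s ∂ρ) * ENNReal.ofReal (W 0) :=
        lintegral_mul_const _ ENNReal.measurable_ofReal
    _ < ∞ := ENNReal.mul_lt_top hint.lintegral_lt_top ENNReal.ofReal_lt_top

end Tail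

lemma sub_mul_le_intervalIntegral_of_antitoneOn {W : ℝ → ℝ} {u v : ℝ} (huv : u ≤ v)
    (hW : AntitoneOn W (Icc u v)) : (v - u) * W v ≤ ∫ t in u..v, W t := by
  have hint : IntervalIntegrable W volume u v := by
    rw [← uIcc_of_le huv] at hW
    exact hW.intervalIntegrable
  simpa using intervalIntegral.integral_mono_on huv intervalIntegrable_const hint
    fun t ht => hW ht ⟨huv, le_rfl⟩ ht.2

lemma intervalIntegral_add_le_of_le_mul {W : ℝ → ℝ} (hW : AntitoneOn W (Icc 0 1))
    (hWnn : ∀ t ∈ Icc (0 : ℝ) 1, 0 ≤ W t) {α u v : ℝ} (hα : α ≤ 1) (hu : 0 ≤ u)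
    (hv : v ∈ Icc (0 : ℝ) 1) (huv : u ≤ α * v) :
    (∫ t in v..1, W t) + (1 - α) * (W v * v) ≤ ∫ t in u..1, W t := by
  have huv' : u ≤ v := huv.trans (by nlinarith [hv.1])
  have hu' : u ∈ Icc (0 : ℝ) 1 := ⟨hu, huv'.trans hv.2⟩
  have hone : (1 : ℝ) ∈ Icc (0 : ℝ) 1 := ⟨zero_le_one, le_rfl⟩
  rw [← intervalIntegral.integral_add_adjacent_intervals
    (hW.mono (uIcc_subset_Icc hu' hv)).intervalIntegrable
    (hW.mono (uIcc_subset_Icc hv hone)).intervalIntegrable]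
  have hgap := sub_mul_le_intervalIntegral_of_antitoneOn huv' (hW.mono (Icc_subset_Icc hu hv.2))
  nlinarith [hWnn v hv]

section Gap

variable (ρ₁ ρ₂ : Measure ℝ) [IsProbabilityMeasure ρ₁] [IsProbabilityMeasure ρ₂] {rstar α : ℝ}
  {W : ℝ → ℝ}

lemma intervalIntegral_cdf_add_indicator_le (hα : α ≤ 1)
    (hdom : ∀ r ∈ Ioo 0 rstar, cdf ρ₁ r ≤ α * cdf ρ₂ r) (hW : AntitoneOn W (Icc 0 1))
    (hWnn : ∀ t ∈ Icc (0 : ℝ) 1, 0 ≤ W t) (hWzero : ∀ t, cdf ρ₂ rstar ≤ t → W t = 0)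
    {r : ℝ} (hr : 0 < r) :
    (∫ t in cdf ρ₂ r..1, W t) +
        (Ioo 0 rstar).indicator (fun r => (1 - α) * (W (cdf ρ₂ r) * cdf ρ₂ r)) r ≤
      ∫ t in cdf ρ₁ r..1, W t := by
  rcases lt_or_ge r rstar with hlt | hge
  · rw [indicator_of_mem (mem_Ioo.2 ⟨hr, hlt⟩)]
    exact intervalIntegral_add_le_of_le_mul hW hWnn hα (cdf_mem_Icc ρ₁ r).1 (cdf_mem_Icc ρ₂ r)
      (hdom r ⟨hr, hlt⟩)
  · have hzero : ∫ t in cdf ρ₂ r..1, W t = 0 := by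
      refine (intervalIntegral.integral_congr fun t ht => ?_).trans intervalIntegral.integral_zero
      rw [uIcc_of_le (cdf_mem_Icc ρ₂ r).2] at ht
      exact hWzero t ((monotone_cdf ρ₂ hge).trans ht.1)
    rw [hzero, zero_add, indicator_of_notMem fun h => hge.not_gt h.2]
    exact intervalIntegral_to_one_nonneg (cdf_mem_Icc ρ₁ r) hWnn

theorem le_PhiW_sub_PhiW_of_cdf_le_mul [NullSingletonClass ρ₁] [NullSingletonClass ρ₂]
    (hpos₁ : ∀ᵐ s ∂ρ₁, 0 ≤ s) (hpos₂ : ∀ᵐ s ∂ρ₂, 0 ≤ s) (hint₁ : Integrable (fun r => r) ρ₁)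
    (hrstar : 0 < rstar) (hα : α ≤ 1) (hdom : ∀ r ∈ Ioo 0 rstar, cdf ρ₁ r ≤ α * cdf ρ₂ r)
    (hW : AntitoneOn W (Icc 0 1)) (hWnn : ∀ t ∈ Icc (0 : ℝ) 1, 0 ≤ W t)
    (hWzero : ∀ t, cdf ρ₂ rstar ≤ t → W t = 0) :
    (1 - α) * ∫ r in 0..rstar, W (cdf ρ₂ r) * cdf ρ₂ r ≤ PhiW W ρ₁ - PhiW W ρ₂ := by
  set g : ℝ → ℝ := (Ioo 0 rstar).indicator fun r => (1 - α) * (W (cdf ρ₂ r) * cdf ρ₂ r)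
  have hg_nn : ∀ r, 0 ≤ g r := indicator_nonneg fun r _ => mul_nonneg (sub_nonneg.2 hα)
    (mul_nonneg (hWnn _ (cdf_mem_Icc ρ₂ r)) (cdf_mem_Icc ρ₂ r).1)
  have hg_meas : Measurable g := (measurable_const.mul ((antitone_comp_cdf ρ₂ hW).measurable.mul
    (continuous_cdf ρ₂).measurable)).indicator measurableSet_Ioo
  have hsum : (∫⁻ r in Ioi 0, ENNReal.ofReal (∫ t in cdf ρ₂ r..1, W t)) +
      ∫⁻ r in Ioi 0, ENNReal.ofReal (g r) ≤
        ∫⁻ r in Ioi 0, ENNReal.ofReal (∫ t in cdf ρ₁ r..1, W t) := by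
    rw [← lintegral_add_right (g := fun r => ENNReal.ofReal (g r)) _
      (ENNReal.measurable_ofReal.comp hg_meas)]
    refine setLIntegral_mono' measurableSet_Ioi fun r hr => ?_
    rw [← ENNReal.ofReal_add (intervalIntegral_to_one_nonneg (cdf_mem_Icc ρ₂ r) hWnn) (hg_nn r)]
    exact ENNReal.ofReal_le_ofReal
      (intervalIntegral_cdf_add_indicator_le ρ₁ ρ₂ hα hdom hW hWnn hWzero hr)
  have hfin := (lintegral_ofReal_intervalIntegral_lt_top ρ₁ hint₁ hW hWnn).ne
  have hg_int : (∫⁻ r in Ioi 0, ENNReal.ofReal (g r)).toReal =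
      (1 - α) * ∫ r in 0..rstar, W (cdf ρ₂ r) * cdf ρ₂ r := by
    rw [← integral_eq_lintegral_of_nonneg_ae (ae_of_all _ hg_nn) hg_meas.aestronglyMeasurable,
      setIntegral_indicator measurableSet_Ioo, inter_eq_right.2 Ioo_subset_Ioi_self,
      integral_const_mul, intervalIntegral.integral_of_le hrstar.le, integral_Ioc_eq_integral_Ioo]
  rw [PhiW_eq_toReal_lintegral ρ₁ hpos₁ hW hWnn, PhiW_eq_toReal_lintegral ρ₂ hpos₂ hW hWnn,
    ← hg_int, le_sub_iff_add_le', ← ENNReal.toReal_add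
      (ne_top_of_le_ne_top hfin (le_self_add.trans hsum))
      (ne_top_of_le_ne_top hfin (le_add_self.trans hsum))]
  exact ENNReal.toReal_mono hfin hsum

end Gap

section Distortion

variable {d : ℕ} (μ : Measure (EuclideanSpace ℝ (Fin d))) (S : Set (EuclideanSpace ℝ (Fin d)))

lemma measurable_distS : Measurable (distS S) :=
  ((Metric.continuous_infDist_pt S).pow 2).measurable

instance isProbabilityMeasure_pushS [IsProbabilityMeasure μ] : IsProbabilityMeasure (pushS μ S) :=
  Measure.isProbabilityMeasure_map (measurable_distS S).aemeasurable

lemma ae_nonneg_pushS : ∀ᵐ r ∂(pushS μ S), 0 ≤ r :=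
  (ae_map_iff (measurable_distS S).aemeasurable measurableSet_Ici).2
    (ae_of_all _ fun _ => sq_nonneg _)

end Distortion

theorem PhiW_gap_lower_bound_general {d : ℕ}
    (μ : Measure (EuclideanSpace ℝ (Fin d))) [IsProbabilityMeasure μ]
    (S Sstar : Set (EuclideanSpace ℝ (Fin d)))
    (hna₁ : ∀ r : ℝ, pushS μ S {r} = 0) (hna₂ : ∀ r : ℝ, pushS μ Sstar {r} = 0)
    (hint₁ : Integrable (fun r : ℝ => r) (pushS μ S))
    (rstar : ℝ) (hrstar : 0 < rstar) (α : ℝ) (hα : α ∈ Ioo (0 : ℝ) 1)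
    (hdom : ∀ r ∈ Ioo (0 : ℝ) rstar, cdf (pushS μ S) r ≤ α * cdf (pushS μ Sstar) r)
    (W : ℝ → ℝ) (hWanti : AntitoneOn W (Icc 0 1)) (hWnn : ∀ t ∈ Icc (0 : ℝ) 1, 0 ≤ W t)
    (hWzero : ∀ t, cdf (pushS μ Sstar) rstar ≤ t → W t = 0) :
    PhiW W (pushS μ S) - PhiW W (pushS μ Sstar) ≥
      (1 - α) * ∫ r in (0 : ℝ)..rstar,
        W (cdf (pushS μ Sstar) r) * cdf (pushS μ Sstar) r :=
  haveI : NullSingletonClass (pushS μ S) := ⟨hna₁⟩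
  haveI : NullSingletonClass (pushS μ Sstar) := ⟨hna₂⟩
  le_PhiW_sub_PhiW_of_cdf_le_mul _ _ (ae_nonneg_pushS μ S) (ae_nonneg_pushS μ Sstar) hint₁ hrstar
    hα.2.le hdom hWanti hWnn hWzero

/-- Lemma 5: if `F_{μ_S}(r) ≤ α F_{μ_{S*}}(r)` for all `r ∈ (0,r*)` and `W` is nonincreasing
on `[0,1]` with `W(t) = 0` for `t ≥ F_{μ_{S*}}(r*)`, then
`Φ_W(μ_S) - Φ_W(μ_{S*}) ≥ (1-α) ∫_0^{r*} W(F_{μ_{S*}}(r)) F_{μ_{S*}}(r) dr`. -/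
theorem PhiW_gap_lower_bound {d : ℕ}
    (μ : Measure (EuclideanSpace ℝ (Fin d))) [IsProbabilityMeasure μ]
    (S Sstar : Set (EuclideanSpace ℝ (Fin d)))
    (hS : IsCompact S) (hSne : S.Nonempty) (hSstar : IsCompact Sstar) (hSstarne : Sstar.Nonempty)
    (hna₁ : ∀ r : ℝ, pushS μ S {r} = 0) (hna₂ : ∀ r : ℝ, pushS μ Sstar {r} = 0)
    (hint₁ : Integrable (fun r : ℝ => r) (pushS μ S))
    (hint₂ : Integrable (fun r : ℝ => r) (pushS μ Sstar))
    (rstar : ℝ) (hrstar : 0 < rstar) (α : ℝ) (hα : α ∈ Ioo (0 : ℝ) 1)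
    (hdom : ∀ r ∈ Ioo (0 : ℝ) rstar, cdf (pushS μ S) r ≤ α * cdf (pushS μ Sstar) r)
    (W : ℝ → ℝ) (hWanti : AntitoneOn W (Icc 0 1)) (hWnn : ∀ t ∈ Icc (0 : ℝ) 1, 0 ≤ W t)
    (hWzero : ∀ t, cdf (pushS μ Sstar) rstar ≤ t → W t = 0) :
    PhiW W (pushS μ S) - PhiW W (pushS μ Sstar) ≥
      (1 - α) * ∫ r in (0 : ℝ)..rstar,
        W (cdf (pushS μ Sstar) r) * cdf (pushS μ Sstar) r :=
  PhiW_gap_lower_bound_general μ S Sstar hna₁ hna₂ hint₁ rstar hrstar α hα hdom W hWanti hWnn hWzero
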